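/- arXiv:2002.04466 — 2 statements merged into one kernel-verified Lean document; each statement's English description precedes it below -/
import Mathlib

section
/- Let (R, P) be a Rota-Baxter algebra of weight 0 and b_0 ∈ k. Define P̃ : R^ℕ → R^ℕ recursively by P̃(f)_0 = P(f_0) and P̃(f)_{n+1} = b_0 P̃(f)_n + P̃(∂f)_n, where ∂(f)_m = f_{m+1}. Then P̃ is a Rota-Baxter operator of weight 0 on the weight-0 Hurwitz series algebra R^ℕ, and satisfies ∂P̃ = b_0 P̃ + P̃∂. -/
open Finset

/-- The weight-0 Hurwitz product on sequences. -/
def hmul0 {R : Type*} [CommRing R] (f g : ℕ → R) : ℕ → R :=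
  fun n => ∑ j ∈ range (n + 1), n.choose j • (f (n - j) * g j)

/-- The shift operator ∂(f)_n = f_{n+1}. -/
def der {R : Type*} (f : ℕ → R) : ℕ → R := fun n => f (n + 1)

/-- The cover of P determined by P̃(f)_0 = P(f_0) and
P̃(f)_{n+1} = b_0 P̃(f)_n + P̃(∂f)_n. -/
def covAux {K R : Type*} [CommRing K] [CommRing R] [Algebra K R]
    (P : R → R) (b0 : K) : ℕ → (ℕ → R) → R
  | 0, f => P (f 0)
  | n + 1, f => b0 • covAux P b0 n f + covAux P b0 n (der f)

/-!
Both sides of the Rota–Baxter identity, as functions `B f g` of the two sequences, obey the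
same shift recursion `∂ B f g = 2 b₀ • B f g + B (∂f) g + B f (∂g)`: on the left this is the
Leibniz rule for the Hurwitz product combined with `∂P̃ = b₀ P̃ + P̃ ∂`, on the right it is the
same computation carried out inside `P̃`. A sequence is determined by its `0`-th term and its
shift, so induction on the index reduces the identity to its `0`-th term, which is the
Rota–Baxter identity for `P` at `f 0, g 0`.
-/

section Shift

variable {S M : Type*}

lemma der_add [Add M] (f g : ℕ → M) : der (f + g) = der f + der g := rfl

lemma der_smul [SMul S M] (c : S) (f : ℕ → M) : der (c • f) = c • der f := rfl

lemma eq_of_der_eq_smul_add [SMul S M] [Add M] (c : S)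
    (B C : (ℕ → M) → (ℕ → M) → ℕ → M)
    (hB : ∀ f g, der (B f g) = c • B f g + B (der f) g + B f (der g))
    (hC : ∀ f g, der (C f g) = c • C f g + C (der f) g + C f (der g))
    (h0 : ∀ f g, B f g 0 = C f g 0) : B = C := by
  funext f g n
  induction n generalizing f g with
  | zero => exact h0 f g
  | succ n ih =>
    calc B f g (n + 1) = c • B f g n + B (der f) g n + B f (der g) n := congrFun (hB f g) n
      _ = c • C f g n + C (der f) g n + C f (der g) n := by rw [ih, ih, ih]
      _ = C f g (n + 1) := (congrFun (hC f g) n).symm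

end Shift

section Hurwitz

variable {K R : Type*} [CommRing K] [CommRing R] [Algebra K R]

lemma der_hmul0 (f g : ℕ → R) :
    der (hmul0 f g) = hmul0 (der f) g + hmul0 f (der g) := by
  funext n
  have hshift : ∀ j ∈ range (n + 1), n.choose j • (f (n + 1 - j) * g j)
      = n.choose j • (der f (n - j) * g j) := fun j hj => by
    rw [der, Nat.sub_add_comm (Nat.lt_succ_iff.mp (mem_range.mp hj))]
  simpa only [hmul0, der, Pi.add_apply, sum_congr rfl hshift]
    using sum_choose_succ_nsmul (fun j i => f i * g j) n

lemma hmul0_add_left (f f' g : ℕ → R) : hmul0 (f + f') g = hmul0 f g + hmul0 f' g := by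
  funext n
  simp only [hmul0, Pi.add_apply, add_mul, smul_add, sum_add_distrib]

lemma hmul0_add_right (f g g' : ℕ → R) : hmul0 f (g + g') = hmul0 f g + hmul0 f g' := by
  funext n
  simp only [hmul0, Pi.add_apply, mul_add, smul_add, sum_add_distrib]

lemma hmul0_smul_left (c : K) (f g : ℕ → R) : hmul0 (c • f) g = c • hmul0 f g := by
  funext n
  simp only [hmul0, Pi.smul_apply, smul_mul_assoc, smul_sum, smul_comm _ c]

lemma hmul0_smul_right (c : K) (f g : ℕ → R) : hmul0 f (c • g) = c • hmul0 f g := by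
  funext n
  simp only [hmul0, Pi.smul_apply, mul_smul_comm, smul_sum, smul_comm _ c]

end Hurwitz

section Cover

variable {K R : Type*} [CommRing K] [CommRing R] [Algebra K R] (P : R →ₗ[K] R) (b0 : K)

lemma covAux_add : ∀ (n : ℕ) (f g : ℕ → R),
    covAux P b0 n (f + g) = covAux P b0 n f + covAux P b0 n g
  | 0, f, g => map_add P (f 0) (g 0)
  | n + 1, f, g => by
    simp only [covAux, der_add, covAux_add n, smul_add]
    abel

lemma covAux_smul : ∀ (n : ℕ) (c : K) (f : ℕ → R),
    covAux P b0 n (c • f) = c • covAux P b0 n f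
  | 0, c, f => map_smul P c (f 0)
  | n + 1, c, f => by
    simp only [covAux, der_smul, covAux_smul n, smul_add, smul_comm b0 c]

def cover : (ℕ → R) →ₗ[K] (ℕ → R) where
  toFun f n := covAux P b0 n f
  map_add' f g := funext fun n => covAux_add P b0 n f g
  map_smul' c f := funext fun n => covAux_smul P b0 n c f

lemma cover_apply (f : ℕ → R) (n : ℕ) : cover P b0 f n = covAux P b0 n f := rfl

lemma der_cover (f : ℕ → R) :
    der (cover P b0 f) = b0 • cover P b0 f + cover P b0 (der f) := rfl

end Cover

section RotaBaxter

variable {K R : Type*} [CommRing K] [CommRing R] [Algebra K R] (P : R →ₗ[K] R) (b0 : K)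

def coverCross (f g : ℕ → R) : ℕ → R := hmul0 (cover P b0 f) g + hmul0 f (cover P b0 g)

lemma der_hmul0_cover (f g : ℕ → R) :
    der (hmul0 (cover P b0 f) (cover P b0 g))
      = (2 * b0) • hmul0 (cover P b0 f) (cover P b0 g)
        + hmul0 (cover P b0 (der f)) (cover P b0 g)
        + hmul0 (cover P b0 f) (cover P b0 (der g)) := by
  rw [der_hmul0, der_cover, der_cover, hmul0_add_left, hmul0_add_right, hmul0_smul_left,
    hmul0_smul_right]
  module

lemma der_coverCross (f g : ℕ → R) :
    der (coverCross P b0 f g)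
      = b0 • coverCross P b0 f g + coverCross P b0 (der f) g + coverCross P b0 f (der g) := by
  simp only [coverCross, der_add, der_hmul0, der_cover, hmul0_add_left, hmul0_add_right,
    hmul0_smul_left, hmul0_smul_right]
  module

lemma der_cover_coverCross (f g : ℕ → R) :
    der (cover P b0 (coverCross P b0 f g))
      = (2 * b0) • cover P b0 (coverCross P b0 f g)
        + cover P b0 (coverCross P b0 (der f) g) + cover P b0 (coverCross P b0 f (der g)) := by
  rw [der_cover, der_coverCross, map_add, map_add, map_smul]
  module

lemma hmul0_cover_cover (hP : ∀ x y : R, P x * P y = P (P x * y) + P (x * P y))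
    (f g : ℕ → R) :
    hmul0 (cover P b0 f) (cover P b0 g) = cover P b0 (coverCross P b0 f g) := by
  refine congrFun₂ (eq_of_der_eq_smul_add (2 * b0) _ _ (der_hmul0_cover P b0)
    (der_cover_coverCross P b0) fun f g => ?_) f g
  simpa [hmul0, cover_apply, covAux, coverCross] using hP (f 0) (g 0)

end RotaBaxter

/-- If (R,P) is a Rota-Baxter algebra of weight 0, the recursively defined cover P̃
is a Rota-Baxter operator of weight 0 on the weight-0 Hurwitz series algebra,
and satisfies ∂P̃ = b_0 P̃ + P̃∂. -/
theorem stmt12 {K R : Type*} [CommRing K] [CommRing R] [Algebra K R]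
    (P : R →ₗ[K] R) (b0 : K)
    (hP : ∀ x y : R, P x * P y = P (P x * y) + P (x * P y)) :
    (∀ f g : ℕ → R,
      hmul0 (fun n => covAux (K := K) P b0 n f) (fun n => covAux (K := K) P b0 n g)
        = (fun n => covAux (K := K) P b0 n (hmul0 (fun m => covAux (K := K) P b0 m f) g))
          + (fun n => covAux (K := K) P b0 n (hmul0 f (fun m => covAux (K := K) P b0 m g)))) ∧
    (∀ (f : ℕ → R) (n : ℕ),
      der (fun m => covAux (K := K) P b0 m f) n
        = b0 • covAux (K := K) P b0 n f + covAux (K := K) P b0 n (der f)) :=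
  ⟨fun f g => (hmul0_cover_cover P b0 hP f g).trans (map_add _ _ _), fun _ _ => rfl⟩
end

section
/- Let k be an integral domain of characteristic 0 and r ≥ 1, a_0,...,a_r ∈ k with a_r ≠ 0. Set φ(x) = Σ a_i x^i and let (R, P) be the Rota-Baxter algebra of weight 0 with R the quotient of the divided power algebra (basis z_0,z_1 with z_0 identity, z_1² = 0, z_i = 0 for i ≥ 2) and P(z_0) = z_1, P(z_1) = 0. Let P̃ be the unique cover of P on R^ℕ (weight-0 Hurwitz product) satisfying ∂P̃ = φ(∂), i.e., P̃(f)_0 = P(f_0) and P̃(f)_{n+1} = Σ_{i=0}^{r} a_i f_{n+i}. Then P̃ is not a Rota-Baxter operator of weight 0 on R^ℕ. -/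
/-!
Test the Rota-Baxter identity on `f = g = δ_r`, the sequence with a single `1` in position `r`,
at index `2`. Since `r ≥ 1`, `F = P̃ δ_r` has `F₀ = P(0) = 0` and `F₁ = a_r`, so the left side
is `(F F)₂ = 2 F₁² = 2 a_r²`. On the right, `F δ_r` vanishes below index `r + 1` and equals
`(r + 1) F₁` there, so each of the two terms (equal by commutativity of the Hurwitz product) is `a_r (r + 1) a_r`. Comparing scalar parts
gives `2 r a_r² = 0`, impossible in a domain of characteristic zero.
-/

open Finset

/-- The Rota-Baxter operator of weight 0 on the truncated divided power algebra
K[z₁]/(z₁²) (dual numbers): P(z_0) = z_1, P(z_1) = 0, i.e. P(a + b z₁) = a z₁. -/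
def Ptrunc {K : Type*} [CommRing K] (x : DualNumber K) : DualNumber K :=
  TrivSqZeroExt.inr x.fst

/-- The cover P̃ of P determined by P̃(f)_0 = P(f_0) and
P̃(f)_{n+1} = Σ_{i=0}^{r} a_i f_{n+i} (i.e. ∂P̃ = φ(∂) for φ = Σ a_i x^i). -/
def cov15 {K : Type*} [CommRing K] (a : ℕ → K) (r : ℕ)
    (f : ℕ → DualNumber K) : ℕ → DualNumber K :=
  fun n => if n = 0 then Ptrunc (f 0) else ∑ i ∈ range (r + 1), a i • f (n - 1 + i)

section Hurwitz

variable {R : Type*} [CommRing R]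

theorem hmul0_comm (f g : ℕ → R) : hmul0 f g = hmul0 g f := by
  funext n
  unfold hmul0
  rw [← sum_range_reflect]
  refine sum_congr rfl fun j hj => ?_
  have hjn : j ≤ n := Nat.le_of_lt_succ (mem_range.mp hj)
  rw [Nat.add_sub_cancel, Nat.choose_symm hjn, Nat.sub_sub_self hjn, mul_comm]

theorem hmul0_apply_two (f g : ℕ → R) :
    hmul0 f g 2 = f 2 * g 0 + (2 : ℕ) • (f 1 * g 1) + f 0 * g 2 := by
  simp [hmul0, sum_range_succ]

theorem hmul0_single_right (f : ℕ → R) (m : ℕ) (c : R) (n : ℕ) :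
    hmul0 f (Pi.single m c) n = if m ≤ n then n.choose m • (f (n - m) * c) else 0 := by
  simp only [hmul0, Pi.single_apply, mul_ite, mul_zero, smul_ite, smul_zero,
    sum_ite_eq', mem_range, Nat.lt_succ_iff]

theorem hmul0_single_right_eq_zero_of_le (f : ℕ → R) (hf : f 0 = 0) {m n : ℕ} (c : R)
    (hnm : n ≤ m) :
    hmul0 f (Pi.single m c) n = 0 := by
  rw [hmul0_single_right]
  split_ifs with hmn
  · rw [show n - m = 0 by omega, hf, zero_mul, smul_zero]
  · rfl

end Hurwitz

section Cover

variable {K : Type*} [CommRing K] (a : ℕ → K) (r : ℕ)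

theorem cov15_succ (f : ℕ → DualNumber K) (n : ℕ) :
    cov15 a r f (n + 1) = ∑ i ∈ range (r + 1), a i • f (n + i) := rfl

theorem cov15_succ_of_forall_eq_zero (f : ℕ → DualNumber K) (n : ℕ)
    (hf : ∀ i < r, f (n + i) = 0) : cov15 a r f (n + 1) = a r • f (n + r) := by
  rw [cov15_succ, sum_range_succ, sum_eq_zero fun i hi => by rw [hf i (mem_range.mp hi), smul_zero],
    zero_add]

theorem cov15_single_one {m : ℕ} (hm : m ≤ r) (c : DualNumber K) :
    cov15 a r (Pi.single m c) 1 = a m • c := by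
  simp only [cov15_succ, zero_add, Pi.single_apply, smul_ite, smul_zero, sum_ite_eq',
    mem_range, Nat.lt_succ_iff.mpr hm, if_true]

end Cover

/-- For K a domain of characteristic 0, r ≥ 1 and a_r ≠ 0, the cover P̃ with
∂P̃ = φ(∂), φ = Σ_{i=0}^r a_i x^i, of the Rota-Baxter operator P on the truncated
divided power algebra is not a Rota-Baxter operator of weight 0 on R^ℕ. -/
theorem stmt15 {K : Type*} [CommRing K] [IsDomain K] [CharZero K]
    (r : ℕ) (hr : 1 ≤ r) (a : ℕ → K) (har : a r ≠ 0) :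
    ¬ (∀ f g : ℕ → DualNumber K,
        hmul0 (cov15 a r f) (cov15 a r g)
          = cov15 a r (hmul0 (cov15 a r f) g) + cov15 a r (hmul0 f (cov15 a r g))) := by
  intro h
  set δ : ℕ → DualNumber K := Pi.single r 1
  set F := cov15 a r δ
  have hF0 : F 0 = 0 := by
    show Ptrunc ((Pi.single r 1 : ℕ → DualNumber K) 0) = 0
    rw [Pi.single_eq_of_ne (by omega), Ptrunc, TrivSqZeroExt.fst_zero,
      TrivSqZeroExt.inr_zero]
  have hF1 : F 1 = a r • 1 := cov15_single_one a r le_rfl 1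
  have hlhs : hmul0 F F 2 = (2 : ℕ) • (F 1 * F 1) := by
    rw [hmul0_apply_two, hF0, zero_mul, mul_zero, zero_add, add_zero]
  have hrhs : cov15 a r (hmul0 F δ) 2 = a r • ((r + 1 : ℕ) • F 1) := by
    have hvanish : ∀ i < r, hmul0 F δ (1 + i) = 0 := fun i hi =>
      hmul0_single_right_eq_zero_of_le F hF0 1 (by omega)
    rw [cov15_succ_of_forall_eq_zero a r _ 1 hvanish, hmul0_single_right, if_pos (by omega),
      Nat.add_sub_cancel, mul_one, add_comm 1 r, Nat.choose_succ_self_right]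
  have h2 := congrArg TrivSqZeroExt.fst (congrFun (h δ δ) 2)
  rw [Pi.add_apply, hmul0_comm δ F, hlhs, hrhs, hF1] at h2
  simp only [TrivSqZeroExt.fst_add, TrivSqZeroExt.fst_smul, TrivSqZeroExt.fst_mul,
    TrivSqZeroExt.fst_one, smul_eq_mul, mul_one] at h2
  have hr0 : (r : K) ≠ 0 := Nat.cast_ne_zero.mpr (by omega)
  exact mul_ne_zero (mul_ne_zero two_ne_zero hr0) (mul_ne_zero har har) (by linear_combination -h2)
end
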